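/- arXiv:2604.04813 — 6 statements merged into one kernel-verified Lean document; each statement's English description precedes it below -/
import Mathlib

section
/- Let H be a left R-bialgebroid with an invertible counital 2-cocycle F ∈ H⊗_R H, and S : H → H any algebra antihomomorphism with S∘β = α such that V_F := (SF¹)F² is invertible in H. Then the map S_F : h ↦ V_F⁻¹(Sh)V_F is an algebra antihomomorphism and V_F⁻¹ = (S_F F̄¹)F̄² where F⁻¹ = F̄¹ ⊗ F̄², and in particular μ∘(S_F ⊗ id)(I_{R_F}) = 0. -/
open TensorProduct

noncomputable section Bialgebroid

variable (k R H : Type*) [CommRing k] [Ring R] [Ring H] [Algebra k R] [Algebra k H]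

/-- Data of a left `R`-bialgebroid over `k`, with a chosen `k`-linear lift
`Δ : H → H ⊗ₖ H` of the comultiplication `H → H ⊗_R H`. -/
structure BgdCore where
  /-- the source map -/
  α : R →ₐ[k] H
  /-- the target map (an algebra antihomomorphism) -/
  β : R →ₗ[k] H
  β_one : β 1 = 1
  β_mul : ∀ r s : R, β (r * s) = β s * β r
  αβ_comm : ∀ r s : R, α r * β s = β s * α r
  /-- lift of the comultiplication -/
  Δ : H →ₗ[k] H ⊗[k] H
  /-- the counit -/
  ε : H →ₗ[k] R

variable {k R H}

namespace BgdCore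

/-- kernel of `H ⊗ₖ H ⊗ₖ H → H ⊗ H ⊗ H` over the base, for general
source/target maps `a`, `b`. -/
def iR3g (a b : R → H) : Submodule k ((H ⊗[k] H) ⊗[k] H) :=
  Submodule.span k
    ({x | ∃ (r : R) (g g' g'' : H),
        x = ((b r * g) ⊗ₜ[k] g') ⊗ₜ[k] g'' - (g ⊗ₜ[k] (a r * g')) ⊗ₜ[k] g''} ∪
     {x | ∃ (r : R) (g g' g'' : H),
        x = (g ⊗ₜ[k] (b r * g')) ⊗ₜ[k] g'' - (g ⊗ₜ[k] g') ⊗ₜ[k] (a r * g'')})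

variable (D : BgdCore k R H)

/-- `I_R`, the kernel of the projection `H ⊗ₖ H → H ⊗_R H`. -/
def iR : Submodule k (H ⊗[k] H) :=
  Submodule.span k
    {x | ∃ (r : R) (g g' : H), x = (D.β r * g) ⊗ₜ[k] g' - g ⊗ₜ[k] (D.α r * g')}

/-- kernel of `H ⊗ₖ H ⊗ₖ H → H ⊗_R H ⊗_R H`. -/
def iR3 : Submodule k ((H ⊗[k] H) ⊗[k] H) :=
  iR3g (fun r => D.α r) (fun r => D.β r)

/-- `x ⊗ y ↦ α(ε x) * y`, realizing the left counit constraint. -/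
def counitL : H ⊗[k] H →ₗ[k] H :=
  LinearMap.mul' k H ∘ₗ TensorProduct.map (D.α.toLinearMap ∘ₗ D.ε) LinearMap.id

/-- `x ⊗ y ↦ β(ε y) * x`, realizing the right counit constraint. -/
def counitR : H ⊗[k] H →ₗ[k] H :=
  LinearMap.mul' k H ∘ₗ TensorProduct.map (D.β ∘ₗ D.ε) LinearMap.id
    ∘ₗ (TensorProduct.comm k H H).toLinearMap

end BgdCore

variable (k R H) in
/-- A left `R`-bialgebroid; identities involving `H ⊗_R H` are stated for the
chosen lifts modulo the ideal `I_R`. -/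
structure LeftBialgebroid extends BgdCore k R H where
  εα : ∀ r : R, ε (α r) = r
  εβ : ∀ r : R, ε (β r) = r
  ε_lmul : ∀ (r : R) (h : H), ε (α r * h) = r * ε h
  ε_rmul : ∀ (r : R) (h : H), ε (β r * h) = ε h * r
  ε_weakmul : ∀ g h : H, ε (g * h) = ε (g * α (ε h))
  counit_left : ∀ h : H, toBgdCore.counitL (Δ h) = h
  counit_right : ∀ h : H, toBgdCore.counitR (Δ h) = h
  Δ_one : Δ 1 - 1 ∈ toBgdCore.iR
  Δ_mul : ∀ g h : H, Δ (g * h) - Δ g * Δ h ∈ toBgdCore.iR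
  Δ_bimod : ∀ (a b : R) (h : H),
    Δ (α a * (β b * h)) - (α a ⊗ₜ[k] β b) * Δ h ∈ toBgdCore.iR
  Δ_ideal : ∀ h : H, ∀ x ∈ toBgdCore.iR, Δ h * x ∈ toBgdCore.iR
  coassoc : ∀ h : H,
    (TensorProduct.map Δ LinearMap.id) (Δ h)
      - (TensorProduct.assoc k H H H).symm ((TensorProduct.map LinearMap.id Δ) (Δ h))
      ∈ toBgdCore.iR3

/-- `x ⊗ y ↦ (Dl(T x) * C) * (y ⊗ 1)`; Sweedler: `(Tx)₍₁₎C¹y ⊗ (Tx)₍₂₎C²`. -/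
def sandL (Dl : H →ₗ[k] H ⊗[k] H) (T : H →ₗ[k] H) (C : H ⊗[k] H) :
    H ⊗[k] H →ₗ[k] H ⊗[k] H :=
  LinearMap.mul' k (H ⊗[k] H) ∘ₗ
    TensorProduct.map (LinearMap.mulRight k C ∘ₗ Dl ∘ₗ T) ((TensorProduct.mk k H H).flip 1)

/-- `x ⊗ y ↦ (Dl(T y) * C) * (1 ⊗ x)`. -/
def sandR (Dl : H →ₗ[k] H ⊗[k] H) (T : H →ₗ[k] H) (C : H ⊗[k] H) :
    H ⊗[k] H →ₗ[k] H ⊗[k] H :=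
  LinearMap.mul' k (H ⊗[k] H) ∘ₗ
    TensorProduct.map (LinearMap.mulRight k C ∘ₗ Dl ∘ₗ T) (TensorProduct.mk k H H 1)
    ∘ₗ (TensorProduct.comm k H H).toLinearMap

/-- `(x ⊗ y) ⊗ z ↦ Dl(T x) * (y ⊗ z)`, lift of the map `δ_S`. -/
def trimapL (Dl : H →ₗ[k] H ⊗[k] H) (T : H →ₗ[k] H) :
    (H ⊗[k] H) ⊗[k] H →ₗ[k] H ⊗[k] H :=
  LinearMap.mul' k (H ⊗[k] H) ∘ₗ TensorProduct.map (Dl ∘ₗ T) LinearMap.id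
    ∘ₗ (TensorProduct.assoc k H H H).toLinearMap

/-- `(x ⊗ y) ⊗ z ↦ Dl(T z) * (x ⊗ y)`, lift of the map `δ_{S⁻¹}`. -/
def trimapR (Dl : H →ₗ[k] H ⊗[k] H) (T : H →ₗ[k] H) :
    (H ⊗[k] H) ⊗[k] H →ₗ[k] H ⊗[k] H :=
  LinearMap.mul' k (H ⊗[k] H) ∘ₗ TensorProduct.map (Dl ∘ₗ T) LinearMap.id
    ∘ₗ (TensorProduct.comm k (H ⊗[k] H) H).toLinearMap

/-- `V`-element: for `F = F¹ ⊗ F²` this is `(T F¹) F²`. -/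
def Vof (T : H →ₗ[k] H) (F : H ⊗[k] H) : H :=
  LinearMap.mul' k H ((TensorProduct.map T LinearMap.id) F)

/-- conjugated map `h ↦ a * (T h) * b`. -/
def SFmap (T : H →ₗ[k] H) (a b : H) : H →ₗ[k] H :=
  LinearMap.mulLeft k a ∘ₗ LinearMap.mulRight k b ∘ₗ T

/-- A Böhm–Szlachányi invertible antipode for a left bialgebroid. -/
structure BSAntipode (B : LeftBialgebroid k R H) where
  /-- the antipode -/
  S : H →ₗ[k] H
  /-- its inverse -/
  Sinv : H →ₗ[k] H
  S_Sinv : ∀ h : H, S (Sinv h) = h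
  Sinv_S : ∀ h : H, Sinv (S h) = h
  S_one : S 1 = 1
  S_antimul : ∀ g h : H, S (g * h) = S h * S g
  Sβ : ∀ r : R, S (B.toBgdCore.β r) = B.toBgdCore.α r
  Sinvα : ∀ r : R, Sinv (B.toBgdCore.α r) = B.toBgdCore.β r
  left_axiom : ∀ h : H,
    sandL B.toBgdCore.Δ S 1 (B.toBgdCore.Δ h) - (1 : H) ⊗ₜ[k] S h ∈ B.toBgdCore.iR
  right_axiom : ∀ h : H,
    sandR B.toBgdCore.Δ Sinv 1 (B.toBgdCore.Δ h) - (Sinv h) ⊗ₜ[k] (1 : H) ∈ B.toBgdCore.iR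

/-- A Drinfeld–Xu invertible counital 2-cocycle. -/
structure DXCocycle (B : LeftBialgebroid k R H) where
  /-- a lift of the 2-cocycle -/
  F : H ⊗[k] H
  /-- a lift of its inverse -/
  Fbar : H ⊗[k] H
  counital_l : B.toBgdCore.counitL F = 1
  counital_r : B.toBgdCore.counitR F = 1
  cocycle :
    (TensorProduct.map B.toBgdCore.Δ LinearMap.id) F * (F ⊗ₜ[k] (1 : H))
      - (TensorProduct.assoc k H H H).symm ((TensorProduct.map LinearMap.id B.toBgdCore.Δ) F)
        * (TensorProduct.assoc k H H H).symm ((1 : H) ⊗ₜ[k] F) ∈ B.toBgdCore.iR3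
  inv_right : F * Fbar - 1 ∈ B.toBgdCore.iR
  inv_left : Fbar * F - 1 ∈ Submodule.map (LinearMap.mulLeft k Fbar) B.toBgdCore.iR

namespace DXCocycle

variable {B : LeftBialgebroid k R H} (C : DXCocycle B)

/-- twisted source `α_F(r) = α(F¹ ▷ r) F²`. -/
def alphaF (r : R) : H :=
  B.toBgdCore.counitL (C.F * (B.toBgdCore.α r ⊗ₜ[k] (1 : H)))

/-- twisted target `β_F(r) = β(F² ▷ r) F¹`. -/
def betaF (r : R) : H :=
  B.toBgdCore.counitR (C.F * ((1 : H) ⊗ₜ[k] B.toBgdCore.α r))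

/-- `I_{R_F} = F⁻¹ I_R`, the kernel of `H ⊗ₖ H → H ⊗_{R_F} H`. -/
def iRF : Submodule k (H ⊗[k] H) :=
  Submodule.map (LinearMap.mulLeft k C.Fbar) B.toBgdCore.iR

/-- lift of the twisted comultiplication `Δ_F(h) = F⁻¹ Δ(h) F`. -/
def ΔF : H →ₗ[k] H ⊗[k] H :=
  LinearMap.mulLeft k C.Fbar ∘ₗ LinearMap.mulRight k C.F ∘ₗ B.toBgdCore.Δ

/-- `α_F` as a linear map. -/
def alphaFlin : R →ₗ[k] H :=
  B.toBgdCore.counitL ∘ₗ LinearMap.mulLeft k C.F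
    ∘ₗ (TensorProduct.mk k H H).flip 1 ∘ₗ B.toBgdCore.α.toLinearMap

/-- `β_F` as a linear map. -/
def betaFlin : R →ₗ[k] H :=
  B.toBgdCore.counitR ∘ₗ LinearMap.mulLeft k C.F
    ∘ₗ TensorProduct.mk k H H 1 ∘ₗ B.toBgdCore.α.toLinearMap

/-- left counit constraint of the twisted bialgebroid. -/
def counitLF : H ⊗[k] H →ₗ[k] H :=
  LinearMap.mul' k H ∘ₗ TensorProduct.map (C.alphaFlin ∘ₗ B.toBgdCore.ε) LinearMap.id

/-- right counit constraint of the twisted bialgebroid. -/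
def counitRF : H ⊗[k] H →ₗ[k] H :=
  LinearMap.mul' k H ∘ₗ TensorProduct.map (C.betaFlin ∘ₗ B.toBgdCore.ε) LinearMap.id
    ∘ₗ (TensorProduct.comm k H H).toLinearMap

end DXCocycle

end Bialgebroid

variable {k R H : Type*} [CommRing k] [Ring R] [Ring H] [Algebra k R] [Algebra k H]

section WvAux

/-- auxiliary map `a ⊗ b ↦ S(a) (V b)`. -/
noncomputable def Wv (S : H →ₗ[k] H) (V : H) : H ⊗[k] H →ₗ[k] H :=
  LinearMap.mul' k H ∘ₗ TensorProduct.map S (LinearMap.mulLeft k V)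

lemma Wv_tmul (S : H →ₗ[k] H) (V a b : H) :
    Wv S V (a ⊗ₜ[k] b) = S a * (V * b) := by
  simp [Wv]

lemma Wv_mul (S : H →ₗ[k] H) (hSmul : ∀ g h : H, S (g * h) = S h * S g)
    (V : H) (x : H ⊗[k] H) (c d : H) :
    Wv S V (x * (c ⊗ₜ[k] d)) = S c * Wv S V x * d := by
  induction x using TensorProduct.induction_on with
  | zero => simp
  | tmul a b =>
      simp only [Algebra.TensorProduct.tmul_mul_tmul, Wv_tmul, hSmul, mul_assoc]
  | add x y hx hy =>
      rw [add_mul, map_add, hx, hy, map_add, mul_add, add_mul]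

lemma Wv_one_eq_Vof (S : H →ₗ[k] H) (x : H ⊗[k] H) :
    Wv S 1 x = Vof S x := by
  induction x using TensorProduct.induction_on with
  | zero => simp [Vof]
  | tmul a b => simp [Wv_tmul, Vof]
  | add x y hx hy => simp [Vof, map_add] at hx hy ⊢; rw [hx, hy]

lemma Wv_one_iR (B : LeftBialgebroid k R H)
    (S : H →ₗ[k] H) (hSmul : ∀ g h : H, S (g * h) = S h * S g)
    (hSβ : ∀ r : R, S (B.toBgdCore.β r) = B.toBgdCore.α r)
    (x : H ⊗[k] H) (hx : x ∈ B.toBgdCore.iR) : Wv S 1 x = 0 := by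
  induction hx using Submodule.span_induction with
  | mem y hy =>
      obtain ⟨r, g, g', rfl⟩ := hy
      rw [map_sub, Wv_tmul, Wv_tmul, hSmul, hSβ, one_mul, one_mul, mul_assoc, sub_self]
  | zero => simp
  | add x y _ _ hx hy => rw [map_add, hx, hy, add_zero]
  | smul a x _ hx => rw [map_smul, hx, smul_zero]

lemma Wv_F_mul (B : LeftBialgebroid k R H) (C : DXCocycle B)
    (S : H →ₗ[k] H) (hSmul : ∀ g h : H, S (g * h) = S h * S g)
    (x : H ⊗[k] H) : Wv S 1 (C.F * x) = Wv S (Vof S C.F) x := by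
  induction x using TensorProduct.induction_on with
  | zero => simp
  | tmul c d =>
      rw [Wv_mul S hSmul _ C.F c d, Wv_tmul, Wv_one_eq_Vof, mul_assoc]
  | add x y hx hy => rw [mul_add, map_add, hx, hy, map_add]

lemma Wv_V_Fbar (B : LeftBialgebroid k R H) (C : DXCocycle B)
    (S : H →ₗ[k] H) (hS1 : S 1 = 1) (hSmul : ∀ g h : H, S (g * h) = S h * S g)
    (hSβ : ∀ r : R, S (B.toBgdCore.β r) = B.toBgdCore.α r) :
    Wv S (Vof S C.F) C.Fbar = 1 := by
  rw [← Wv_F_mul B C S hSmul]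
  have h := C.inv_right
  have : C.F * C.Fbar = (C.F * C.Fbar - 1) + 1 := (sub_add_cancel _ _).symm
  rw [this, map_add, Wv_one_iR B S hSmul hSβ _ h,
    Algebra.TensorProduct.one_def, Wv_tmul, hS1]
  simp

lemma Vof_SFmap (S : H →ₗ[k] H) (Vinv V : H) (x : H ⊗[k] H) :
    Vof (SFmap S Vinv V) x = Vinv * Wv S V x := by
  induction x using TensorProduct.induction_on with
  | zero => simp [Vof]
  | tmul a b => simp [Vof, SFmap, Wv_tmul, mul_assoc]
  | add x y hx hy =>
      simp only [Vof, map_add] at hx hy ⊢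
      rw [hx, hy, mul_add]

end WvAux

/-- If `S` is an algebra antihomomorphism with `S∘β = α` and `V_F = (SF¹)F²`
is invertible, then `S_F : h ↦ V_F⁻¹ (Sh) V_F` is an algebra antihomomorphism,
`V_F⁻¹ = (S_F F̄¹)F̄²` and `μ ∘ (S_F ⊗ id)(I_{R_F}) = 0`. -/
theorem SF_antihom_VFinv (B : LeftBialgebroid k R H) (C : DXCocycle B)
    (S : H →ₗ[k] H) (hS1 : S 1 = 1) (hSmul : ∀ g h : H, S (g * h) = S h * S g)
    (hSβ : ∀ r : R, S (B.toBgdCore.β r) = B.toBgdCore.α r)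
    (Vinv : H) (hV1 : Vof S C.F * Vinv = 1) (hV2 : Vinv * Vof S C.F = 1) :
    (∀ g h : H, SFmap S Vinv (Vof S C.F) (g * h)
        = SFmap S Vinv (Vof S C.F) h * SFmap S Vinv (Vof S C.F) g) ∧
    Vof (SFmap S Vinv (Vof S C.F)) C.Fbar = Vinv ∧
    (∀ x ∈ C.iRF,
      LinearMap.mul' k H
        ((TensorProduct.map (SFmap S Vinv (Vof S C.F)) LinearMap.id) x) = 0) := by
  set V := Vof S C.F with hVdef
  have hWF : Wv S V C.Fbar = 1 := Wv_V_Fbar B C S hS1 hSmul hSβ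
  refine ⟨?_, ?_, ?_⟩
  · intro g h
    simp only [SFmap, LinearMap.comp_apply, LinearMap.mulLeft_apply,
      LinearMap.mulRight_apply, hSmul]
    have h1 : Vinv * (S h * V) * (Vinv * (S g * V))
        = Vinv * (S h * (V * Vinv * (S g * V))) := by simp only [mul_assoc]
    rw [h1, hV1, one_mul]
    simp only [mul_assoc]
  · rw [Vof_SFmap, hWF, mul_one]
  · intro x hx
    obtain ⟨y, hy, rfl⟩ := hx
    have key : Wv S V (C.Fbar * y) = 0 := by
      induction hy using Submodule.span_induction with
      | mem z hz =>
          obtain ⟨r, g, g', rfl⟩ := hz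
          rw [mul_sub, map_sub, Wv_mul S hSmul, Wv_mul S hSmul, hWF, hSmul, hSβ,
            mul_one, mul_one, mul_assoc, sub_self]
      | zero => simp
      | add a b _ _ ha hb => rw [mul_add, map_add, ha, hb, add_zero]
      | smul a z _ hz => rw [mul_smul_comm, map_smul, hz, smul_zero]
    have : LinearMap.mul' k H
        ((TensorProduct.map (SFmap S Vinv V) LinearMap.id) (LinearMap.mulLeft k C.Fbar y))
        = Vof (SFmap S Vinv V) (C.Fbar * y) := rfl
    rw [this, Vof_SFmap, key, mul_zero]
end

section
/- Let H be a left R-bialgebroid with invertible counital 2-cocycle F and an invertible algebra antihomomorphism S with S∘β = α such that V_F = (SF¹)F² is invertible. Then S_F(h) = V_F⁻¹(Sh)V_F is invertible with inverse S_F⁻¹(h) = (S⁻¹V_F⁻¹)(S⁻¹h)(S⁻¹V_F), and moreover S⁻¹V_F = (S⁻¹F²)F¹ and S⁻¹(V_F⁻¹) = (S⁻¹V_F)⁻¹ = (S_F⁻¹F̄²)F̄¹. -/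
open TensorProduct

variable {k R H : Type*} [CommRing k] [Ring R] [Ring H] [Algebra k R] [Algebra k H]

/-- auxiliary map `x ⊗ y ↦ (T y) * x`. -/
noncomputable def PhiAux {k H : Type*} [CommRing k] [Ring H] [Algebra k H] (T : H →ₗ[k] H) :
    H ⊗[k] H →ₗ[k] H :=
  LinearMap.mul' k H ∘ₗ TensorProduct.map T LinearMap.id
    ∘ₗ (TensorProduct.comm k H H).toLinearMap

@[simp] lemma PhiAux_tmul {k H : Type*} [CommRing k] [Ring H] [Algebra k H]
    (T : H →ₗ[k] H) (x y : H) : PhiAux T (x ⊗ₜ[k] y) = T y * x := by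
  simp [PhiAux]

lemma Vof_comm {k H : Type*} [CommRing k] [Ring H] [Algebra k H]
    (T : H →ₗ[k] H) (X : H ⊗[k] H) :
    Vof T ((TensorProduct.comm k H H) X) = PhiAux T X := rfl

/-- For bijective `S`, the twisted antipode `S_F` is invertible with
`S_F⁻¹ h = (S⁻¹V_F⁻¹)(S⁻¹h)(S⁻¹V_F)`; moreover `S⁻¹V_F = (S⁻¹F²)F¹` and
`S⁻¹(V_F⁻¹) = (S⁻¹V_F)⁻¹ = (S_F⁻¹ F̄²)F̄¹`. -/
theorem SF_invertible (B : LeftBialgebroid k R H) (C : DXCocycle B)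
    (S Sinv : H →ₗ[k] H) (hSS : ∀ h : H, S (Sinv h) = h) (hSS' : ∀ h : H, Sinv (S h) = h)
    (hS1 : S 1 = 1) (hSmul : ∀ g h : H, S (g * h) = S h * S g)
    (hSβ : ∀ r : R, S (B.toBgdCore.β r) = B.toBgdCore.α r)
    (hSinvα : ∀ r : R, Sinv (B.toBgdCore.α r) = B.toBgdCore.β r)
    (Vinv : H) (hV1 : Vof S C.F * Vinv = 1) (hV2 : Vinv * Vof S C.F = 1) :
    (∀ h : H, SFmap Sinv (Sinv Vinv) (Sinv (Vof S C.F)) (SFmap S Vinv (Vof S C.F) h) = h) ∧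
    (∀ h : H, SFmap S Vinv (Vof S C.F) (SFmap Sinv (Sinv Vinv) (Sinv (Vof S C.F)) h) = h) ∧
    Sinv (Vof S C.F) = Vof Sinv ((TensorProduct.comm k H H) C.F) ∧
    Sinv Vinv * Sinv (Vof S C.F) = 1 ∧
    Sinv (Vof S C.F) * Sinv Vinv = 1 ∧
    Vof (SFmap Sinv (Sinv Vinv) (Sinv (Vof S C.F)))
      ((TensorProduct.comm k H H) C.Fbar) = Sinv Vinv := by
  -- basic consequences of bijectivity
  have hSinv1 : Sinv 1 = 1 := by have := hSS' 1; rwa [hS1] at this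
  have hSinvmul : ∀ g h : H, Sinv (g * h) = Sinv h * Sinv g := by
    intro g h
    conv_lhs => rw [← hSS g, ← hSS h, ← hSmul, hSS']
  set V := Vof S C.F with hVdef
  have h4 : Sinv Vinv * Sinv V = 1 := by rw [← hSinvmul, hV1, hSinv1]
  have h5 : Sinv V * Sinv Vinv = 1 := by rw [← hSinvmul, hV2, hSinv1]
  have h4' : ∀ x : H, Sinv Vinv * (Sinv V * x) = x := by
    intro x; rw [← mul_assoc, h4, one_mul]
  have h5' : ∀ x : H, Sinv V * (Sinv Vinv * x) = x := by
    intro x; rw [← mul_assoc, h5, one_mul]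
  have hv1' : ∀ x : H, V * (Vinv * x) = x := by
    intro x; rw [← mul_assoc, hV1, one_mul]
  have hv2' : ∀ x : H, Vinv * (V * x) = x := by
    intro x; rw [← mul_assoc, hV2, one_mul]
  -- third conjunct, in `PhiAux` form
  have h3 : ∀ X : H ⊗[k] H, Sinv (Vof S X) = PhiAux Sinv X := by
    intro X
    induction X using TensorProduct.induction_on with
    | zero => simp [Vof]
    | tmul x y => simp [Vof, hSinvmul, hSS']
    | add p q hp hq =>
        have hv : Vof S (p + q) = Vof S p + Vof S q := by simp [Vof]
        rw [hv, map_add, hp, hq, map_add]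
  -- `PhiAux Sinv` kills the ideal `I_R`
  have hker : B.toBgdCore.iR ≤ LinearMap.ker (PhiAux Sinv) := by
    rw [BgdCore.iR, Submodule.span_le]
    rintro _ ⟨r, g, g', rfl⟩
    simp [LinearMap.mem_ker, hSinvmul, hSinvα, mul_assoc]
  have hFFbar : PhiAux Sinv (C.F * C.Fbar) = 1 := by
    have h := hker C.inv_right
    rw [LinearMap.mem_ker, map_sub, sub_eq_zero] at h
    rw [h, Algebra.TensorProduct.one_def]
    simp [hSinv1]
  -- multiplicativity-type identity
  have hPhiMul : ∀ (X : H ⊗[k] H) (x y : H),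
      PhiAux Sinv (X * (x ⊗ₜ[k] y)) = Sinv y * PhiAux Sinv X * x := by
    intro X x y
    induction X using TensorProduct.induction_on with
    | zero => simp
    | tmul u v =>
        simp [Algebra.TensorProduct.tmul_mul_tmul, hSinvmul, mul_assoc]
    | add p q hp hq => simp [add_mul, hp, hq, mul_add]
  have hb : PhiAux Sinv C.F = Sinv V := (h3 C.F).symm
  have hmain : ∀ X : H ⊗[k] H,
      PhiAux (SFmap Sinv (Sinv Vinv) (Sinv V)) X
        = Sinv Vinv * PhiAux Sinv (C.F * X) := by
    intro X
    induction X using TensorProduct.induction_on with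
    | zero => simp
    | tmul x y =>
        rw [hPhiMul, hb]
        simp [SFmap, mul_assoc]
    | add p q hp hq => simp [mul_add, hp, hq]
  refine ⟨?_, ?_, ?_, h4, h5, ?_⟩
  · intro h
    simp [SFmap, hSinvmul, hSS', mul_assoc, h4, h4', h5']
  · intro h
    simp [SFmap, hSmul, hSS, mul_assoc, hV1, hV2, hv1', hv2']
  · rw [Vof_comm]; exact h3 C.F
  · rw [Vof_comm, hmain, hFFbar, mul_one]
end

section
/- In a left Hopf R-algebroid with invertible antipode S, there is a unique well-defined k-linear map δ_S : H⊗_R H⊗_R H → H⊗_R H with δ_S(x ⊗_R y ⊗_R z) = (Sx)_(1)y ⊗_R (Sx)_(2)z for all x,y,z ∈ H. -/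
open TensorProduct

variable {k R H : Type*} [CommRing k] [Ring R] [Ring H] [Algebra k R] [Algebra k H]


lemma iR_mul_right_mem (D : BgdCore k R H) {x : H ⊗[k] H} (hx : x ∈ D.iR) (c : H ⊗[k] H) :
    x * c ∈ D.iR := by
  have key : D.iR ≤ D.iR.comap (LinearMap.mulRight k c) := by
    rw [BgdCore.iR, Submodule.span_le]
    rintro _ ⟨r, g, g', rfl⟩
    simp only [SetLike.mem_coe, Submodule.mem_comap, LinearMap.mulRight_apply]
    induction c using TensorProduct.induction_on with
    | zero => simp
    | tmul a b =>
        rw [sub_mul, Algebra.TensorProduct.tmul_mul_tmul, Algebra.TensorProduct.tmul_mul_tmul,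
          mul_assoc, mul_assoc]
        exact Submodule.subset_span ⟨r, g * a, g' * b, rfl⟩
    | add c₁ c₂ h₁ h₂ =>
        rw [mul_add]
        exact Submodule.add_mem _ h₁ h₂
  exact key hx

lemma iR_alpha_mul_left_mem (D : BgdCore k R H) {x : H ⊗[k] H} (hx : x ∈ D.iR) (r : R) :
    ((D.α r) ⊗ₜ[k] (1 : H)) * x ∈ D.iR := by
  have key : D.iR ≤ D.iR.comap (LinearMap.mulLeft k ((D.α r) ⊗ₜ[k] (1 : H))) := by
    rw [BgdCore.iR, Submodule.span_le]
    rintro _ ⟨s, g, g', rfl⟩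
    simp only [SetLike.mem_coe, Submodule.mem_comap, LinearMap.mulLeft_apply]
    rw [mul_sub, Algebra.TensorProduct.tmul_mul_tmul, Algebra.TensorProduct.tmul_mul_tmul,
      ← mul_assoc, D.αβ_comm, mul_assoc]
    simp only [one_mul]
    exact Submodule.subset_span ⟨s, D.α r * g, g', rfl⟩
  exact key hx

lemma Delta_alpha_mem (B : LeftBialgebroid k R H) (r : R) :
    B.toBgdCore.Δ (B.toBgdCore.α r) - (B.toBgdCore.α r) ⊗ₜ[k] (1 : H) ∈ B.toBgdCore.iR := by
  have h1 := B.Δ_bimod r 1 1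
  rw [B.toBgdCore.β_one, one_mul, mul_one] at h1
  have h2 : ((B.toBgdCore.α r) ⊗ₜ[k] (1 : H)) * (B.toBgdCore.Δ 1 - 1)
      ∈ B.toBgdCore.iR := iR_alpha_mul_left_mem _ B.Δ_one r
  have := Submodule.add_mem _ h1 h2
  rw [mul_sub, mul_one] at this
  convert this using 1
  abel

lemma trimapL_maps_iR3 (B : LeftBialgebroid k R H) (A : BSAntipode B) :
    B.toBgdCore.iR3 ≤
      B.toBgdCore.iR.comap (trimapL B.toBgdCore.Δ A.S) := by
  have htri : ∀ x y z : H, trimapL (k := k) B.toBgdCore.Δ A.S ((x ⊗ₜ[k] y) ⊗ₜ[k] z)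
      = B.toBgdCore.Δ (A.S x) * (y ⊗ₜ[k] z) := by
    intro x y z
    simp [trimapL, LinearMap.mul'_apply]
  rw [BgdCore.iR3, BgdCore.iR3g, Submodule.span_le]
  rintro _ (⟨r, g, g', g'', rfl⟩ | ⟨r, g, g', g'', rfl⟩) <;>
    simp only [SetLike.mem_coe, Submodule.mem_comap, map_sub, htri]
  · -- Δ(S(βr g)) (g'⊗g'') - Δ(S g) ((αr g')⊗g'')
    rw [A.S_antimul, A.Sβ]
    have e1 : B.toBgdCore.Δ (A.S g * B.toBgdCore.α r)
        - B.toBgdCore.Δ (A.S g) * B.toBgdCore.Δ (B.toBgdCore.α r) ∈ B.toBgdCore.iR :=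
      B.Δ_mul _ _
    have e2 : B.toBgdCore.Δ (B.toBgdCore.α r) * (g' ⊗ₜ[k] g'')
        - (B.toBgdCore.α r * g') ⊗ₜ[k] g'' ∈ B.toBgdCore.iR := by
      have := iR_mul_right_mem _ (Delta_alpha_mem B r) (g' ⊗ₜ[k] g'')
      rwa [sub_mul, Algebra.TensorProduct.tmul_mul_tmul, one_mul] at this
    have m1 := iR_mul_right_mem _ e1 (g' ⊗ₜ[k] g'')
    have m2 := B.Δ_ideal (A.S g) _ e2
    have := Submodule.add_mem _ m1 m2
    rw [sub_mul, mul_sub, mul_assoc] at this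
    convert this using 1
    abel
  · -- Δ(S g) ((βr g')⊗g'') - Δ(S g) (g'⊗(αr g''))
    rw [← mul_sub]
    exact B.Δ_ideal (A.S g) _ (Submodule.subset_span ⟨r, g', g'', rfl⟩)

/-- Existence and uniqueness of the well-defined map
`δ_S : H ⊗_R H ⊗_R H → H ⊗_R H`, `x ⊗ y ⊗ z ↦ (Sx)₍₁₎y ⊗ (Sx)₍₂₎z`. -/
theorem deltaS_exists_unique (B : LeftBialgebroid k R H) (A : BSAntipode B) :
    ∃! f : (((H ⊗[k] H) ⊗[k] H) ⧸ B.toBgdCore.iR3) →ₗ[k] ((H ⊗[k] H) ⧸ B.toBgdCore.iR),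
      ∀ x y z : H,
        f (Submodule.Quotient.mk ((x ⊗ₜ[k] y) ⊗ₜ[k] z))
          = Submodule.Quotient.mk (B.toBgdCore.Δ (A.S x) * (y ⊗ₜ[k] z)) := by
  set π := B.toBgdCore.iR.mkQ ∘ₗ trimapL (k := k) B.toBgdCore.Δ A.S with hπ
  have hker : B.toBgdCore.iR3 ≤ LinearMap.ker π := by
    intro x hx
    have := trimapL_maps_iR3 B A hx
    simpa [π, LinearMap.mem_ker, Submodule.Quotient.mk_eq_zero] using this
  refine ⟨Submodule.liftQ _ π hker, ?_, ?_⟩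
  · intro x y z
    have : trimapL (k := k) B.toBgdCore.Δ A.S ((x ⊗ₜ[k] y) ⊗ₜ[k] z)
        = B.toBgdCore.Δ (A.S x) * (y ⊗ₜ[k] z) := by
      simp [trimapL, LinearMap.mul'_apply]
    simp [π, Submodule.liftQ_apply, this]
  · intro f hf
    apply Submodule.linearMap_qext
    apply TensorProduct.ext'
    intro xy z
    induction xy using TensorProduct.induction_on with
    | zero => simp
    | tmul x y =>
        have : trimapL (k := k) B.toBgdCore.Δ A.S ((x ⊗ₜ[k] y) ⊗ₜ[k] z)
            = B.toBgdCore.Δ (A.S x) * (y ⊗ₜ[k] z) := by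
          simp [trimapL, LinearMap.mul'_apply]
        simp [π, hf x y z, this]
    | add a b ha hb =>
        have : (a + b) ⊗ₜ[k] z = a ⊗ₜ[k] z + b ⊗ₜ[k] z := TensorProduct.add_tmul a b z
        rw [LinearMap.comp_apply, LinearMap.comp_apply, this, map_add, map_add, map_add]
        rw [LinearMap.comp_apply, LinearMap.comp_apply] at ha hb
        rw [ha, hb]
end

section
/- In a left Hopf R-algebroid with invertible antipode S, there is a unique well-defined k-linear map δ_{S⁻¹} : H⊗_R H⊗_R H → H⊗_R H with δ_{S⁻¹}(x ⊗_R y ⊗_R z) = (S⁻¹z)_(1)x ⊗_R (S⁻¹z)_(2)y for all x,y,z ∈ H. -/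
open TensorProduct

variable {k R H : Type*} [CommRing k] [Ring R] [Ring H] [Algebra k R] [Algebra k H]

section Aux

variable (B : LeftBialgebroid k R H)

lemma mem_iR_gen (r : R) (g g' : H) :
    (B.toBgdCore.β r * g) ⊗ₜ[k] g' - g ⊗ₜ[k] (B.toBgdCore.α r * g') ∈ B.toBgdCore.iR :=
  Submodule.subset_span ⟨r, g, g', rfl⟩

lemma iR_mul_right {x : H ⊗[k] H} (hx : x ∈ B.toBgdCore.iR) (c : H ⊗[k] H) :
    x * c ∈ B.toBgdCore.iR := by
  induction hx using Submodule.span_induction with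
  | mem y hy =>
      obtain ⟨r, g, g', rfl⟩ := hy
      induction c using TensorProduct.induction_on with
      | zero => simpa using Submodule.zero_mem _
      | tmul a b =>
          have : ((B.toBgdCore.β r * g) ⊗ₜ[k] g' - g ⊗ₜ[k] (B.toBgdCore.α r * g')) * (a ⊗ₜ[k] b)
              = (B.toBgdCore.β r * (g * a)) ⊗ₜ[k] (g' * b)
                - (g * a) ⊗ₜ[k] (B.toBgdCore.α r * (g' * b)) := by
            simp [sub_mul, Algebra.TensorProduct.tmul_mul_tmul, mul_assoc]
          rw [this]
          exact mem_iR_gen B r (g * a) (g' * b)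
      | add a b ha hb =>
          rw [mul_add]; exact Submodule.add_mem _ ha hb
  | zero => simpa using Submodule.zero_mem _
  | add y z _ _ hy hz => rw [add_mul]; exact Submodule.add_mem _ hy hz
  | smul a y _ hy => rw [smul_mul_assoc]; exact Submodule.smul_mem _ a hy

lemma iR_one_beta_mul (r : R) {x : H ⊗[k] H} (hx : x ∈ B.toBgdCore.iR) :
    ((1 : H) ⊗ₜ[k] B.toBgdCore.β r) * x ∈ B.toBgdCore.iR := by
  induction hx using Submodule.span_induction with
  | mem y hy =>
      obtain ⟨s, g, g', rfl⟩ := hy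
      have : ((1 : H) ⊗ₜ[k] B.toBgdCore.β r)
            * ((B.toBgdCore.β s * g) ⊗ₜ[k] g' - g ⊗ₜ[k] (B.toBgdCore.α s * g'))
          = (B.toBgdCore.β s * g) ⊗ₜ[k] (B.toBgdCore.β r * g')
            - g ⊗ₜ[k] (B.toBgdCore.α s * (B.toBgdCore.β r * g')) := by
        rw [mul_sub]
        simp only [Algebra.TensorProduct.tmul_mul_tmul, one_mul]
        rw [← mul_assoc, ← B.αβ_comm, mul_assoc]
      rw [this]
      exact mem_iR_gen B s g (B.toBgdCore.β r * g')
  | zero => simpa using Submodule.zero_mem _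
  | add y z _ _ hy hz => rw [mul_add]; exact Submodule.add_mem _ hy hz
  | smul a y _ hy => rw [mul_smul_comm]; exact Submodule.smul_mem _ a hy

lemma Δβ_mem (r : R) :
    B.toBgdCore.Δ (B.toBgdCore.β r) - (1 : H) ⊗ₜ[k] B.toBgdCore.β r ∈ B.toBgdCore.iR := by
  have h1 := B.Δ_bimod 1 r 1
  simp only [map_one, one_mul, mul_one] at h1
  have h2 := iR_one_beta_mul B r B.Δ_one
  rw [mul_sub, mul_one] at h2
  have := Submodule.add_mem _ h1 h2
  convert this using 1
  abel

lemma Sinv_antimul (A : BSAntipode B) (g h : H) :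
    A.Sinv (g * h) = A.Sinv h * A.Sinv g := by
  have : A.S (A.Sinv h * A.Sinv g) = g * h := by
    rw [A.S_antimul, A.S_Sinv, A.S_Sinv]
  rw [← this, A.Sinv_S]

lemma trimapR_tmul (Dl : H →ₗ[k] H ⊗[k] H) (T : H →ₗ[k] H) (x y z : H) :
    trimapR Dl T ((x ⊗ₜ[k] y) ⊗ₜ[k] z) = Dl (T z) * (x ⊗ₜ[k] y) := by
  simp [trimapR]

lemma trimapR_kernel (A : BSAntipode B) :
    B.toBgdCore.iR3 ≤ LinearMap.ker
      (B.toBgdCore.iR.mkQ ∘ₗ trimapR B.toBgdCore.Δ A.Sinv) := by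
  rw [BgdCore.iR3, BgdCore.iR3g, Submodule.span_le]
  rintro x (⟨r, g, g', g'', rfl⟩ | ⟨r, g, g', g'', rfl⟩) <;>
    simp only [SetLike.mem_coe, LinearMap.mem_ker, LinearMap.comp_apply,
      Submodule.mkQ_apply, Submodule.Quotient.mk_eq_zero] <;>
    rw [map_sub, trimapR_tmul, trimapR_tmul]
  · rw [← mul_sub]
    exact B.Δ_ideal _ _ (mem_iR_gen B r g g')
  · rw [Sinv_antimul B A, A.Sinvα]
    set u := A.Sinv g''
    have ht1 : (B.toBgdCore.Δ (u * B.toBgdCore.β r)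
          - B.toBgdCore.Δ u * B.toBgdCore.Δ (B.toBgdCore.β r)) * (g ⊗ₜ[k] g')
        ∈ B.toBgdCore.iR := iR_mul_right B (B.Δ_mul u (B.toBgdCore.β r)) _
    have ht2 : B.toBgdCore.Δ u *
          ((B.toBgdCore.Δ (B.toBgdCore.β r) - (1 : H) ⊗ₜ[k] B.toBgdCore.β r) * (g ⊗ₜ[k] g'))
        ∈ B.toBgdCore.iR := B.Δ_ideal _ _ (iR_mul_right B (Δβ_mem B r) _)
    have key := Submodule.neg_mem _ (Submodule.add_mem _ ht1 ht2)
    convert key using 1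
    have h3 : ((1 : H) ⊗ₜ[k] B.toBgdCore.β r) * (g ⊗ₜ[k] g')
        = g ⊗ₜ[k] (B.toBgdCore.β r * g') := by
      simp [Algebra.TensorProduct.tmul_mul_tmul]
    rw [sub_mul, sub_mul, h3]
    noncomm_ring

end Aux

/-- Existence and uniqueness of the well-defined map
`δ_{S⁻¹} : H ⊗_R H ⊗_R H → H ⊗_R H`, `x ⊗ y ⊗ z ↦ (S⁻¹z)₍₁₎x ⊗ (S⁻¹z)₍₂₎y`. -/
theorem deltaSinv_exists_unique (B : LeftBialgebroid k R H) (A : BSAntipode B) :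
    ∃! f : (((H ⊗[k] H) ⊗[k] H) ⧸ B.toBgdCore.iR3) →ₗ[k] ((H ⊗[k] H) ⧸ B.toBgdCore.iR),
      ∀ x y z : H,
        f (Submodule.Quotient.mk ((x ⊗ₜ[k] y) ⊗ₜ[k] z))
          = Submodule.Quotient.mk (B.toBgdCore.Δ (A.Sinv z) * (x ⊗ₜ[k] y)) := by
  refine ⟨Submodule.liftQ _ (B.toBgdCore.iR.mkQ ∘ₗ trimapR B.toBgdCore.Δ A.Sinv)
      (trimapR_kernel B A), fun x y z => ?_, fun g hg => ?_⟩
  · rw [Submodule.liftQ_apply]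
    simp [trimapR_tmul]
  · apply Submodule.linearMap_qext
    ext x y z
    simp only [TensorProduct.AlgebraTensorModule.curry_apply, TensorProduct.curry_apply,
      LinearMap.coe_restrictScalars, LinearMap.comp_apply, Submodule.mkQ_apply,
      Submodule.liftQ_apply]
    rw [hg x y z]
    simp [trimapR_tmul]
end

section
/- Let H be a left Hopf R-algebroid with invertible antipode S and F an invertible counital 2-cocycle with V_F = (SF¹)F² invertible. Then S_F∘β_F = α_F, i.e. (Sβ_F(r))V_F = V_Fα_F(r) for all r ∈ R, where α_F(r) = α(F¹ ▷ r)F², β_F(r) = β(F² ▷ r)F¹, and S_F(h) = V_F⁻¹(Sh)V_F. -/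
open TensorProduct

variable {k R H : Type*} [CommRing k] [Ring R] [Ring H] [Algebra k R] [Algebra k H]


section AuxProofs

variable {k R H : Type*} [CommRing k] [Ring R] [Ring H] [Algebra k R] [Algebra k H]

namespace BgdCore

variable (D : BgdCore k R H)

lemma counitL_tmul (x y : H) :
    D.counitL (x ⊗ₜ[k] y) = D.α (D.ε x) * y := by
  simp [BgdCore.counitL]

lemma counitR_tmul (x y : H) :
    D.counitR (x ⊗ₜ[k] y) = D.β (D.ε y) * x := by
  simp [BgdCore.counitR]

lemma mem_iR (r : R) (g g' : H) :
    (D.β r * g) ⊗ₜ[k] g' - g ⊗ₜ[k] (D.α r * g') ∈ D.iR :=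
  Submodule.subset_span ⟨r, g, g', rfl⟩

lemma mem_iR3A (r : R) (g g' g'' : H) :
    ((D.β r * g) ⊗ₜ[k] g') ⊗ₜ[k] g'' - (g ⊗ₜ[k] (D.α r * g')) ⊗ₜ[k] g'' ∈ D.iR3 :=
  Submodule.subset_span (Or.inl ⟨r, g, g', g'', rfl⟩)

lemma mem_iR3B (r : R) (g g' g'' : H) :
    (g ⊗ₜ[k] (D.β r * g')) ⊗ₜ[k] g'' - (g ⊗ₜ[k] g') ⊗ₜ[k] (D.α r * g'') ∈ D.iR3 :=
  Submodule.subset_span (Or.inr ⟨r, g, g', g'', rfl⟩)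

lemma iR_mul_right (c : H ⊗[k] H) {x : H ⊗[k] H} (hx : x ∈ D.iR) :
    x * c ∈ D.iR := by
  suffices h : D.iR ≤ D.iR.comap (LinearMap.mulRight k c) from h hx
  rw [iR, Submodule.span_le]
  rintro _ ⟨r, g, g', rfl⟩
  simp only [SetLike.mem_coe, Submodule.mem_comap, LinearMap.mulRight_apply]
  induction c using TensorProduct.induction_on with
  | zero => simp
  | tmul u v =>
      rw [sub_mul]
      simp only [Algebra.TensorProduct.tmul_mul_tmul]
      rw [mul_assoc, mul_assoc]
      exact D.mem_iR r (g * u) (g' * v)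
  | add c₁ c₂ h₁ h₂ => rw [mul_add]; exact add_mem h₁ h₂

lemma iR3_mul_right (c : (H ⊗[k] H) ⊗[k] H) {x : (H ⊗[k] H) ⊗[k] H}
    (hx : x ∈ D.iR3) : x * c ∈ D.iR3 := by
  suffices h : D.iR3 ≤ D.iR3.comap (LinearMap.mulRight k c) from h hx
  rw [iR3, iR3g, Submodule.span_le]
  rintro _ (⟨r, g, g', g'', rfl⟩ | ⟨r, g, g', g'', rfl⟩) <;>
  · simp only [SetLike.mem_coe, Submodule.mem_comap, LinearMap.mulRight_apply]
    induction c using TensorProduct.induction_on with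
    | zero => simp
    | tmul d w =>
        induction d using TensorProduct.induction_on with
        | zero => simp [TensorProduct.zero_tmul]
        | tmul u v =>
            rw [sub_mul]
            simp only [Algebra.TensorProduct.tmul_mul_tmul]
            simp only [mul_assoc]
            first
            | exact D.mem_iR3A r (g * u) (g' * v) (g'' * w)
            | exact D.mem_iR3B r (g * u) (g' * v) (g'' * w)
        | add d₁ d₂ h₁ h₂ =>
            rw [TensorProduct.add_tmul, mul_add]; exact add_mem h₁ h₂
    | add c₁ c₂ h₁ h₂ => rw [mul_add]; exact add_mem h₁ h₂

lemma alphaTmul_mul_iR (s : R) {x : H ⊗[k] H} (hx : x ∈ D.iR) :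
    (D.α s ⊗ₜ[k] (1 : H)) * x ∈ D.iR := by
  suffices h : D.iR ≤ D.iR.comap (LinearMap.mulLeft k (D.α s ⊗ₜ[k] (1 : H))) from h hx
  rw [iR, Submodule.span_le]
  rintro _ ⟨r, g, g', rfl⟩
  simp only [SetLike.mem_coe, Submodule.mem_comap, LinearMap.mulLeft_apply, mul_sub]
  simp only [Algebra.TensorProduct.tmul_mul_tmul, one_mul]
  rw [← mul_assoc, D.αβ_comm s r, mul_assoc]
  exact D.mem_iR r (D.α s * g) g'

lemma counitR_mul_tmul_one (x : H ⊗[k] H) (b : H) :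
    D.counitR (x * (b ⊗ₜ[k] (1 : H))) = D.counitR x * b := by
  induction x using TensorProduct.induction_on with
  | zero => simp
  | tmul p q =>
      simp only [Algebra.TensorProduct.tmul_mul_tmul, mul_one, counitR_tmul, mul_assoc]
  | add x₁ x₂ h₁ h₂ => rw [add_mul, map_add, map_add, h₁, h₂, add_mul]

end BgdCore

namespace LeftBialgebroid

variable (B : LeftBialgebroid k R H)

lemma counitL_iR {x : H ⊗[k] H} (hx : x ∈ B.toBgdCore.iR) :
    B.toBgdCore.counitL x = 0 := by
  suffices h : B.toBgdCore.iR ≤ LinearMap.ker B.toBgdCore.counitL from h hx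
  rw [BgdCore.iR, Submodule.span_le]
  rintro _ ⟨r, g, g', rfl⟩
  simp only [SetLike.mem_coe, LinearMap.mem_ker, map_sub, BgdCore.counitL_tmul]
  rw [B.ε_rmul, map_mul, mul_assoc, sub_self]

lemma counitR_iR {x : H ⊗[k] H} (hx : x ∈ B.toBgdCore.iR) :
    B.toBgdCore.counitR x = 0 := by
  suffices h : B.toBgdCore.iR ≤ LinearMap.ker B.toBgdCore.counitR from h hx
  rw [BgdCore.iR, Submodule.span_le]
  rintro _ ⟨r, g, g', rfl⟩
  simp only [SetLike.mem_coe, LinearMap.mem_ker, map_sub, BgdCore.counitR_tmul]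
  rw [B.ε_lmul, B.toBgdCore.β_mul, mul_assoc, sub_self]

lemma Δα_sub_mem (s : R) :
    B.toBgdCore.Δ (B.toBgdCore.α s) - (B.toBgdCore.α s ⊗ₜ[k] (1 : H))
      ∈ B.toBgdCore.iR := by
  have h1 := B.Δ_bimod s 1 1
  rw [B.toBgdCore.β_one, one_mul, mul_one] at h1
  have h2 : (B.toBgdCore.α s ⊗ₜ[k] (1 : H)) * (B.toBgdCore.Δ 1 - 1)
      ∈ B.toBgdCore.iR := B.toBgdCore.alphaTmul_mul_iR s B.Δ_one
  have e : B.toBgdCore.Δ (B.toBgdCore.α s) - (B.toBgdCore.α s ⊗ₜ[k] (1 : H))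
      = (B.toBgdCore.Δ (B.toBgdCore.α s)
          - (B.toBgdCore.α s ⊗ₜ[k] (1 : H)) * B.toBgdCore.Δ 1)
        + (B.toBgdCore.α s ⊗ₜ[k] (1 : H)) * (B.toBgdCore.Δ 1 - 1) := by
    rw [mul_sub, mul_one]; abel
  rw [e]
  exact add_mem h1 h2

/-- `counitL (Δ g · (α s ⊗ 1)) = g · α s`. -/
lemma counitL_Δ_mul (g : H) (s : R) :
    B.toBgdCore.counitL (B.toBgdCore.Δ g * (B.toBgdCore.α s ⊗ₜ[k] (1 : H)))
      = g * B.toBgdCore.α s := by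
  have h1 : B.toBgdCore.Δ g * (B.toBgdCore.α s ⊗ₜ[k] (1 : H))
      - B.toBgdCore.Δ (g * B.toBgdCore.α s) ∈ B.toBgdCore.iR := by
    have ha : B.toBgdCore.Δ g *
        ((B.toBgdCore.α s ⊗ₜ[k] (1 : H)) - B.toBgdCore.Δ (B.toBgdCore.α s))
        ∈ B.toBgdCore.iR := by
      refine B.Δ_ideal g _ ?_
      have := B.toBgdCore.iR.neg_mem (B.Δα_sub_mem s)
      rwa [neg_sub] at this
    have hb := B.toBgdCore.iR.neg_mem (B.Δ_mul g (B.toBgdCore.α s))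
    rw [neg_sub] at hb
    have e : B.toBgdCore.Δ g * (B.toBgdCore.α s ⊗ₜ[k] (1 : H))
        - B.toBgdCore.Δ (g * B.toBgdCore.α s)
        = B.toBgdCore.Δ g *
            ((B.toBgdCore.α s ⊗ₜ[k] (1 : H)) - B.toBgdCore.Δ (B.toBgdCore.α s))
          + (B.toBgdCore.Δ g * B.toBgdCore.Δ (B.toBgdCore.α s)
              - B.toBgdCore.Δ (g * B.toBgdCore.α s)) := by
      rw [mul_sub]; abel
    rw [e]
    exact add_mem ha hb
  have h2 := B.counitL_iR h1
  rw [map_sub, sub_eq_zero] at h2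
  rw [h2, B.counit_left]

/-- `counitR (Δ g · (1 ⊗ α s)) = g · β s`. -/
lemma counitR_Δ_mul (g : H) (s : R) :
    B.toBgdCore.counitR (B.toBgdCore.Δ g * ((1 : H) ⊗ₜ[k] B.toBgdCore.α s))
      = g * B.toBgdCore.β s := by
  have hx : (B.toBgdCore.β s ⊗ₜ[k] (1 : H)) - ((1 : H) ⊗ₜ[k] B.toBgdCore.α s)
      ∈ B.toBgdCore.iR := by
    have := B.toBgdCore.mem_iR s 1 1
    rwa [mul_one, mul_one] at this
  have h1 : B.toBgdCore.Δ g * ((B.toBgdCore.β s ⊗ₜ[k] (1 : H))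
      - ((1 : H) ⊗ₜ[k] B.toBgdCore.α s)) ∈ B.toBgdCore.iR := B.Δ_ideal g _ hx
  rw [mul_sub] at h1
  have h2 := B.counitR_iR h1
  rw [map_sub, sub_eq_zero] at h2
  rw [← h2, B.toBgdCore.counitR_mul_tmul_one, B.counit_right]

end LeftBialgebroid

/-- collapse the middle tensor leg with the counit:
`(x ⊗ y) ⊗ z ↦ x ⊗ α(ε y) z`. -/
noncomputable def e2mid (B : LeftBialgebroid k R H) : (H ⊗[k] H) ⊗[k] H →ₗ[k] H ⊗[k] H :=
  TensorProduct.map LinearMap.id B.toBgdCore.counitL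
    ∘ₗ (TensorProduct.assoc k H H H).toLinearMap

namespace LeftBialgebroid

variable (B : LeftBialgebroid k R H)

lemma e2mid_tmul (x y z : H) :
    e2mid B ((x ⊗ₜ[k] y) ⊗ₜ[k] z)
      = x ⊗ₜ[k] (B.toBgdCore.α (B.toBgdCore.ε y) * z) := by
  simp [e2mid, BgdCore.counitL_tmul]

lemma e2mid_iR3 {x : (H ⊗[k] H) ⊗[k] H} (hx : x ∈ B.toBgdCore.iR3) :
    e2mid B x ∈ B.toBgdCore.iR := by
  suffices h : B.toBgdCore.iR3 ≤ B.toBgdCore.iR.comap (e2mid B) from h hx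
  rw [BgdCore.iR3, BgdCore.iR3g, Submodule.span_le]
  rintro _ (⟨r, g, g', g'', rfl⟩ | ⟨r, g, g', g'', rfl⟩) <;>
      simp only [SetLike.mem_coe, Submodule.mem_comap, map_sub, e2mid_tmul]
  · rw [B.ε_lmul, map_mul, mul_assoc]
    exact B.toBgdCore.mem_iR r g (B.toBgdCore.α (B.toBgdCore.ε g') * g'')
  · rw [B.ε_rmul, map_mul, mul_assoc, sub_self]
    exact B.toBgdCore.iR.zero_mem

lemma claimA (x' y z : H) (u : H ⊗[k] H) :
    e2mid B ((u * (x' ⊗ₜ[k] z)) ⊗ₜ[k] y)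
      - (B.toBgdCore.counitR
          (u * ((1 : H) ⊗ₜ[k] B.toBgdCore.α (B.toBgdCore.ε z))) * x') ⊗ₜ[k] y
      ∈ B.toBgdCore.iR := by
  induction u using TensorProduct.induction_on with
  | zero => simp
  | tmul p q =>
      simp only [Algebra.TensorProduct.tmul_mul_tmul, mul_one, e2mid_tmul,
        BgdCore.counitR_tmul]
      rw [← B.ε_weakmul q z, mul_assoc]
      have := B.toBgdCore.iR.neg_mem
        (B.toBgdCore.mem_iR (B.toBgdCore.ε (q * z)) (p * x') y)
      rwa [neg_sub] at this
  | add u₁ u₂ h₁ h₂ =>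
      simp only [add_mul, mul_add, map_add, TensorProduct.add_tmul,
        TensorProduct.tmul_add]
      rw [add_sub_add_comm]
      exact add_mem h₁ h₂

lemma claimB (x x' y' w : H) (v : H ⊗[k] H) :
    e2mid B ((((TensorProduct.assoc k H H H).symm (x ⊗ₜ[k] v))
        * (((1 : H) ⊗ₜ[k] x') ⊗ₜ[k] y')) * (((1 : H) ⊗ₜ[k] w) ⊗ₜ[k] (1 : H)))
      = x ⊗ₜ[k] (B.toBgdCore.counitL
          (v * (B.toBgdCore.α (B.toBgdCore.ε (x' * w)) ⊗ₜ[k] (1 : H))) * y') := by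
  induction v using TensorProduct.induction_on with
  | zero =>
      rw [TensorProduct.tmul_zero, LinearEquiv.map_zero]
      simp
  | tmul p q =>
      simp only [TensorProduct.assoc_symm_tmul, Algebra.TensorProduct.tmul_mul_tmul,
        mul_one, one_mul, e2mid_tmul, BgdCore.counitL_tmul]
      rw [mul_assoc p x' w, B.ε_weakmul p (x' * w), mul_assoc]
  | add v₁ v₂ h₁ h₂ =>
      simp only [add_mul, mul_add, map_add, TensorProduct.add_tmul,
        TensorProduct.tmul_add]
      rw [h₁, h₂]

lemma M12 (w : H) (G G' : H ⊗[k] H) :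
    e2mid B (((TensorProduct.map B.toBgdCore.Δ LinearMap.id) G * (G' ⊗ₜ[k] (1 : H)))
        * (((1 : H) ⊗ₜ[k] w) ⊗ₜ[k] (1 : H)))
      - G * ((B.toBgdCore.counitR (G' * ((1 : H) ⊗ₜ[k] w))) ⊗ₜ[k] (1 : H))
      ∈ B.toBgdCore.iR := by
  induction G using TensorProduct.induction_on with
  | zero => simp
  | tmul x y =>
      induction G' using TensorProduct.induction_on with
      | zero => simp
      | tmul x' y' =>
          simp only [TensorProduct.map_tmul, LinearMap.id_coe, id_eq,
            Algebra.TensorProduct.tmul_mul_tmul, mul_one, one_mul,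
            BgdCore.counitR_tmul]
          rw [mul_assoc (B.toBgdCore.Δ x)]
          simp only [Algebra.TensorProduct.tmul_mul_tmul, mul_one, one_mul]
          have h := B.claimA x' y (y' * w) (B.toBgdCore.Δ x)
          rw [B.counitR_Δ_mul x (B.toBgdCore.ε (y' * w)), mul_assoc] at h
          exact h
      | add G₁ G₂ h₁ h₂ =>
          simp only [add_mul, mul_add, map_add, TensorProduct.add_tmul,
            TensorProduct.tmul_add]
          rw [add_sub_add_comm]
          exact add_mem h₁ h₂
  | add G₁ G₂ h₁ h₂ =>
      simp only [add_mul, mul_add, map_add, TensorProduct.add_tmul,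
        TensorProduct.tmul_add]
      rw [add_sub_add_comm]
      exact add_mem h₁ h₂

lemma M34 (w : H) (G G' : H ⊗[k] H) :
    e2mid B ((((TensorProduct.assoc k H H H).symm
          ((TensorProduct.map LinearMap.id B.toBgdCore.Δ) G))
        * ((TensorProduct.assoc k H H H).symm ((1 : H) ⊗ₜ[k] G')))
        * (((1 : H) ⊗ₜ[k] w) ⊗ₜ[k] (1 : H)))
      = G * ((1 : H) ⊗ₜ[k] B.toBgdCore.counitL (G' * (w ⊗ₜ[k] (1 : H)))) := by
  induction G using TensorProduct.induction_on with
  | zero =>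
      rw [map_zero, LinearEquiv.map_zero]
      simp
  | tmul x y =>
      induction G' using TensorProduct.induction_on with
      | zero =>
          rw [TensorProduct.tmul_zero, LinearEquiv.map_zero]
          simp
      | tmul x' y' =>
          have h := B.claimB x x' y' w (B.toBgdCore.Δ y)
          rw [B.counitL_Δ_mul y (B.toBgdCore.ε (x' * w))] at h
          simp only [TensorProduct.map_tmul, LinearMap.id_coe, id_eq,
            TensorProduct.assoc_symm_tmul, Algebra.TensorProduct.tmul_mul_tmul,
            mul_one, one_mul, BgdCore.counitL_tmul]
          rw [h, mul_assoc]
      | add G₁ G₂ h₁ h₂ =>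
          simp only [add_mul, mul_add, map_add, TensorProduct.add_tmul,
            TensorProduct.tmul_add]
          rw [h₁, h₂]
  | add G₁ G₂ h₁ h₂ =>
      simp only [add_mul, mul_add, map_add, TensorProduct.add_tmul,
        TensorProduct.tmul_add]
      rw [h₁, h₂]

end LeftBialgebroid

namespace DXCocycle

variable {B : LeftBialgebroid k R H} (C : DXCocycle B)

/-- The key lemma: `F (β_F(r) ⊗ 1) ≡ F (1 ⊗ α_F(r))` modulo `I_R`. -/
lemma key (r : R) :
    C.F * (C.betaF r ⊗ₜ[k] (1 : H)) - C.F * ((1 : H) ⊗ₜ[k] C.alphaF r)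
      ∈ B.toBgdCore.iR := by
  set w := B.toBgdCore.α r with hw
  set c : (H ⊗[k] H) ⊗[k] H := ((1 : H) ⊗ₜ[k] w) ⊗ₜ[k] (1 : H) with hc
  set L : (H ⊗[k] H) ⊗[k] H :=
    (TensorProduct.map B.toBgdCore.Δ LinearMap.id) C.F * (C.F ⊗ₜ[k] (1 : H)) with hL
  set Rr : (H ⊗[k] H) ⊗[k] H :=
    (TensorProduct.assoc k H H H).symm ((TensorProduct.map LinearMap.id B.toBgdCore.Δ) C.F)
      * (TensorProduct.assoc k H H H).symm ((1 : H) ⊗ₜ[k] C.F) with hR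
  have h0 : L - Rr ∈ B.toBgdCore.iR3 := C.cocycle
  have h1 : L * c - Rr * c ∈ B.toBgdCore.iR3 := by
    have := B.toBgdCore.iR3_mul_right c h0
    rwa [sub_mul] at this
  have h2 : e2mid B (L * c) - e2mid B (Rr * c) ∈ B.toBgdCore.iR := by
    have := B.e2mid_iR3 h1
    rwa [map_sub] at this
  have h3 := B.M12 w C.F C.F
  have h4 := B.M34 w C.F C.F
  have hb : B.toBgdCore.counitR (C.F * ((1 : H) ⊗ₜ[k] w)) = C.betaF r := rfl
  have ha : B.toBgdCore.counitL (C.F * (w ⊗ₜ[k] (1 : H))) = C.alphaF r := rfl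
  rw [hb] at h3
  rw [ha] at h4
  have h5 := add_mem (B.toBgdCore.iR.neg_mem h3) h2
  rw [h4] at h5
  have e : -(e2mid B (L * c) - C.F * (C.betaF r ⊗ₜ[k] (1 : H)))
      + (e2mid B (L * c) - C.F * ((1 : H) ⊗ₜ[k] C.alphaF r))
      = C.F * (C.betaF r ⊗ₜ[k] (1 : H)) - C.F * ((1 : H) ⊗ₜ[k] C.alphaF r) := by
    abel
  rwa [e] at h5

end DXCocycle

/-- the map `x ⊗ y ↦ T(x) y`. -/
noncomputable def psiMap (T : H →ₗ[k] H) : H ⊗[k] H →ₗ[k] H :=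
  LinearMap.mul' k H ∘ₗ TensorProduct.map T LinearMap.id

lemma psiMap_tmul (T : H →ₗ[k] H) (x y : H) : psiMap T (x ⊗ₜ[k] y) = T x * y := by
  simp [psiMap]

namespace BSAntipode

variable {B : LeftBialgebroid k R H} (A : BSAntipode B)

lemma psi_iR {x : H ⊗[k] H} (hx : x ∈ B.toBgdCore.iR) : psiMap A.S x = 0 := by
  suffices h : B.toBgdCore.iR ≤ LinearMap.ker (psiMap A.S) from h hx
  rw [BgdCore.iR, Submodule.span_le]
  rintro _ ⟨r, g, g', rfl⟩
  simp only [SetLike.mem_coe, LinearMap.mem_ker, map_sub, psiMap_tmul]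
  rw [A.S_antimul, A.Sβ, mul_assoc, sub_self]

lemma psi_mul_tmul_one (x : H ⊗[k] H) (a : H) :
    psiMap A.S (x * (a ⊗ₜ[k] (1 : H))) = A.S a * psiMap A.S x := by
  induction x using TensorProduct.induction_on with
  | zero => simp
  | tmul p q =>
      simp only [Algebra.TensorProduct.tmul_mul_tmul, mul_one, psiMap_tmul]
      rw [A.S_antimul, mul_assoc]
  | add x₁ x₂ h₁ h₂ => rw [add_mul, map_add, h₁, h₂, map_add, mul_add]

lemma psi_mul_one_tmul (x : H ⊗[k] H) (b : H) :
    psiMap A.S (x * ((1 : H) ⊗ₜ[k] b)) = psiMap A.S x * b := by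
  induction x using TensorProduct.induction_on with
  | zero => simp
  | tmul p q =>
      simp only [Algebra.TensorProduct.tmul_mul_tmul, mul_one, psiMap_tmul, mul_assoc]
  | add x₁ x₂ h₁ h₂ => rw [add_mul, map_add, h₁, h₂, map_add, add_mul]

end BSAntipode

end AuxProofs

/-- `S_F ∘ β_F = α_F`, i.e. `(S β_F(r)) V_F = V_F α_F(r)`. -/
theorem SF_betaF_alphaF (B : LeftBialgebroid k R H) (A : BSAntipode B) (C : DXCocycle B)
    (Vinv : H) (hV1 : Vof A.S C.F * Vinv = 1) (hV2 : Vinv * Vof A.S C.F = 1) (r : R) :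
    A.S (C.betaF r) * Vof A.S C.F = Vof A.S C.F * C.alphaF r ∧
    SFmap A.S Vinv (Vof A.S C.F) (C.betaF r) = C.alphaF r := by
  have hV : Vof A.S C.F = psiMap A.S C.F := rfl
  have hkey := C.key r
  have h0 : psiMap A.S (C.F * (C.betaF r ⊗ₜ[k] (1 : H)))
      = psiMap A.S (C.F * ((1 : H) ⊗ₜ[k] C.alphaF r)) := by
    have := A.psi_iR hkey
    rwa [map_sub, sub_eq_zero] at this
  have h1 : A.S (C.betaF r) * Vof A.S C.F = Vof A.S C.F * C.alphaF r := by
    rw [hV, ← A.psi_mul_tmul_one C.F (C.betaF r), h0, A.psi_mul_one_tmul]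
  refine ⟨h1, ?_⟩
  show Vinv * (A.S (C.betaF r) * Vof A.S C.F) = C.alphaF r
  rw [h1, ← mul_assoc, hV2, one_mul]
end

section
/- Let H be a left Hopf R-algebroid with invertible antipode S and F an invertible counital 2-cocycle such that V_F = (SF¹)F² is invertible. Then (SF̄¹)_(1)(V_F)_(1)F'¹F̄² ⊗_R (SF̄¹)_(2)(V_F)_(2)F'² = 1 ⊗_R V_F in H⊗_R H, where F⁻¹ = F̄¹⊗F̄² and F' denotes another copy of F; moreover the left-hand side is independent of the chosen representative of F⁻¹. -/
open TensorProduct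

variable {k R H : Type*} [CommRing k] [Ring R] [Ring H] [Algebra k R] [Algebra k H]

set_option synthInstance.maxHeartbeats 1000000
set_option maxHeartbeats 4000000

namespace TwistAux

variable {k R H : Type*} [CommRing k] [Ring R] [Ring H] [Algebra k R] [Algebra k H]

lemma mem_chain {M : Type*} [AddCommGroup M] [Module k M] {P : Submodule k M} {a b c : M}
    (h1 : a - b ∈ P) (h2 : b - c ∈ P) : a - c ∈ P := by
  have := add_mem h1 h2; rwa [sub_add_sub_cancel] at this

lemma mem_rev {M : Type*} [AddCommGroup M] [Module k M] {P : Submodule k M} {a b : M}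
    (h : a - b ∈ P) : b - a ∈ P := by
  rw [← neg_sub]; exact P.neg_mem h

lemma sandL_tmul (Dl : H →ₗ[k] H ⊗[k] H) (T : H →ₗ[k] H) (Cc : H ⊗[k] H) (x y : H) :
    sandL Dl T Cc (x ⊗ₜ[k] y) = (Dl (T x) * Cc) * (y ⊗ₜ[k] (1 : H)) := by
  simp [sandL]

lemma trimapL_tmul (Dl : H →ₗ[k] H ⊗[k] H) (T : H →ₗ[k] H) (x y z : H) :
    trimapL Dl T ((x ⊗ₜ[k] y) ⊗ₜ[k] z) = Dl (T x) * (y ⊗ₜ[k] z) := by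
  simp [trimapL]

lemma Vof_tmul (T : H →ₗ[k] H) (x y : H) : Vof T (x ⊗ₜ[k] y) = T x * y := by
  simp [Vof]

variable (B : LeftBialgebroid k R H)

lemma iR_gen (r : R) (g g' : H) :
    (B.toBgdCore.β r * g) ⊗ₜ[k] g' - g ⊗ₜ[k] (B.toBgdCore.α r * g') ∈ B.toBgdCore.iR :=
  Submodule.subset_span ⟨r, g, g', rfl⟩

lemma iR_mul_right {x : H ⊗[k] H} (hx : x ∈ B.toBgdCore.iR) (a : H ⊗[k] H) :
    x * a ∈ B.toBgdCore.iR := by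
  induction a using TensorProduct.induction_on with
  | zero => simpa using Submodule.zero_mem _
  | add u v hu hv => rw [mul_add]; exact add_mem hu hv
  | tmul u v =>
    refine Submodule.span_induction (p := fun x _ => x * (u ⊗ₜ[k] v) ∈ B.toBgdCore.iR)
      ?_ ?_ ?_ ?_ hx
    · rintro _ ⟨r, g, g', rfl⟩
      rw [sub_mul, Algebra.TensorProduct.tmul_mul_tmul, Algebra.TensorProduct.tmul_mul_tmul,
        mul_assoc, mul_assoc]
      exact iR_gen B r (g * u) (g' * v)
    · simp
    · intro x y _ _ hx hy; rw [add_mul]; exact add_mem hx hy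
    · intro c x _ hx; rw [smul_mul_assoc]; exact Submodule.smul_mem _ c hx

lemma sub_mul_mem {x y : H ⊗[k] H} (h : x - y ∈ B.toBgdCore.iR) (a : H ⊗[k] H) :
    x * a - y * a ∈ B.toBgdCore.iR := by
  rw [← sub_mul]; exact iR_mul_right B h a

lemma Δ_mul_sub_mem (h : H) {x y : H ⊗[k] H} (hxy : x - y ∈ B.toBgdCore.iR) :
    B.toBgdCore.Δ h * x - B.toBgdCore.Δ h * y ∈ B.toBgdCore.iR := by
  rw [← mul_sub]; exact B.Δ_ideal h _ hxy

lemma alpha_mul_mem (r : R) {x : H ⊗[k] H} (hx : x ∈ B.toBgdCore.iR) :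
    (B.toBgdCore.α r ⊗ₜ[k] (1 : H)) * x ∈ B.toBgdCore.iR := by
  refine Submodule.span_induction
    (p := fun x _ => (B.toBgdCore.α r ⊗ₜ[k] (1 : H)) * x ∈ B.toBgdCore.iR) ?_ ?_ ?_ ?_ hx
  · rintro _ ⟨s, g, g', rfl⟩
    rw [mul_sub, Algebra.TensorProduct.tmul_mul_tmul, Algebra.TensorProduct.tmul_mul_tmul,
      one_mul, one_mul, ← mul_assoc, B.toBgdCore.αβ_comm, mul_assoc]
    exact iR_gen B s (B.toBgdCore.α r * g) g'
  · simp
  · intro x y _ _ hx hy; rw [mul_add]; exact add_mem hx hy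
  · intro c x _ hx; rw [mul_smul_comm]; exact Submodule.smul_mem _ c hx

lemma Δ_alpha (r : R) :
    B.toBgdCore.Δ (B.toBgdCore.α r) - B.toBgdCore.α r ⊗ₜ[k] (1 : H) ∈ B.toBgdCore.iR := by
  have h1 := B.Δ_bimod r 1 1
  simp only [B.toBgdCore.β_one, one_mul, mul_one] at h1
  have h2 := alpha_mul_mem B r B.Δ_one
  rw [mul_sub, mul_one] at h2
  exact mem_chain h1 h2

variable (A : BSAntipode B)

lemma SbetaΔ (r : R) (g g' c : H) :
    B.toBgdCore.Δ (A.S (B.toBgdCore.β r * g)) * (g' ⊗ₜ[k] c)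
      - B.toBgdCore.Δ (A.S g) * ((B.toBgdCore.α r * g') ⊗ₜ[k] c) ∈ B.toBgdCore.iR := by
  rw [A.S_antimul, A.Sβ]
  have h1 : B.toBgdCore.Δ (A.S g * B.toBgdCore.α r) * (g' ⊗ₜ[k] c)
      - (B.toBgdCore.Δ (A.S g) * B.toBgdCore.Δ (B.toBgdCore.α r)) * (g' ⊗ₜ[k] c)
      ∈ B.toBgdCore.iR := sub_mul_mem B (B.Δ_mul (A.S g) (B.toBgdCore.α r)) _
  have h2 : B.toBgdCore.Δ (B.toBgdCore.α r) * (g' ⊗ₜ[k] c)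
      - (B.toBgdCore.α r * g') ⊗ₜ[k] c ∈ B.toBgdCore.iR := by
    have := sub_mul_mem B (Δ_alpha B r) (g' ⊗ₜ[k] c)
    rwa [Algebra.TensorProduct.tmul_mul_tmul, one_mul] at this
  have h3 := Δ_mul_sub_mem B (A.S g) h2
  rw [← mul_assoc] at h3
  exact mem_chain h1 h3

lemma sandL_one_iR {x : H ⊗[k] H} (hx : x ∈ B.toBgdCore.iR) :
    sandL B.toBgdCore.Δ A.S 1 x ∈ B.toBgdCore.iR := by
  refine Submodule.span_induction
    (p := fun x _ => sandL B.toBgdCore.Δ A.S 1 x ∈ B.toBgdCore.iR) ?_ ?_ ?_ ?_ hx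
  · rintro _ ⟨r, g, g', rfl⟩
    rw [map_sub, sandL_tmul, sandL_tmul, mul_one, mul_one]
    exact SbetaΔ B A r g g' 1
  · simp
  · intro x y _ _ hx hy; rw [map_add]; exact add_mem hx hy
  · intro c x _ hx; rw [map_smul]; exact Submodule.smul_mem _ c hx

lemma sandL_one_one :
    sandL B.toBgdCore.Δ A.S 1 (1 : H ⊗[k] H) - 1 ∈ B.toBgdCore.iR := by
  have e : (1 : H ⊗[k] H) = (1 : H) ⊗ₜ[k] (1 : H) := rfl
  show sandL B.toBgdCore.Δ A.S 1 ((1 : H) ⊗ₜ[k] (1 : H)) - 1 ∈ B.toBgdCore.iR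
  rw [sandL_tmul, A.S_one, mul_one, ← e, mul_one]
  exact B.Δ_one

lemma trimapL_iR3 {x : (H ⊗[k] H) ⊗[k] H} (hx : x ∈ B.toBgdCore.iR3) :
    trimapL B.toBgdCore.Δ A.S x ∈ B.toBgdCore.iR := by
  refine Submodule.span_induction
    (p := fun x _ => trimapL B.toBgdCore.Δ A.S x ∈ B.toBgdCore.iR) ?_ ?_ ?_ ?_ hx
  · rintro _ (⟨r, g, g', g'', rfl⟩ | ⟨r, g, g', g'', rfl⟩)
    · rw [map_sub, trimapL_tmul, trimapL_tmul]
      exact SbetaΔ B A r g g' g''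
    · rw [map_sub, trimapL_tmul, trimapL_tmul, ← mul_sub]
      exact B.Δ_ideal _ _ (iR_gen B r g' g'')
  · simp
  · intro x y _ _ hx hy; rw [map_add]; exact add_mem hx hy
  · intro c x _ hx; rw [map_smul]; exact Submodule.smul_mem _ c hx

lemma assoc_symm_zero :
    (TensorProduct.assoc k H H H).symm (0 : H ⊗[k] (H ⊗[k] H)) = 0 :=
  (TensorProduct.assoc k H H H).symm.toLinearMap.map_zero

lemma assoc_symm_add (a b : H ⊗[k] (H ⊗[k] H)) :
    (TensorProduct.assoc k H H H).symm (a + b)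
      = (TensorProduct.assoc k H H H).symm a + (TensorProduct.assoc k H H H).symm b :=
  (TensorProduct.assoc k H H H).symm.toLinearMap.map_add a b

lemma Vof_zero (T : H →ₗ[k] H) : Vof T (0 : H ⊗[k] H) = 0 := by simp [Vof]

lemma Vof_add (T : H →ₗ[k] H) (a b : H ⊗[k] H) :
    Vof T (a + b) = Vof T a + Vof T b := by simp [Vof]

lemma sandL_C_zero (Dl : H →ₗ[k] H ⊗[k] H) (T : H →ₗ[k] H) (z : H ⊗[k] H) :
    sandL Dl T 0 z = 0 := by
  induction z using TensorProduct.induction_on with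
  | zero => simp
  | add a b ha hb => rw [map_add, ha, hb, add_zero]
  | tmul x y => rw [sandL_tmul, mul_zero, zero_mul]

lemma sandL_C_add (Dl : H →ₗ[k] H ⊗[k] H) (T : H →ₗ[k] H) (C₁ C₂ : H ⊗[k] H) (z : H ⊗[k] H) :
    sandL Dl T (C₁ + C₂) z = sandL Dl T C₁ z + sandL Dl T C₂ z := by
  induction z using TensorProduct.induction_on with
  | zero => simp
  | add a b ha hb => rw [map_add, ha, hb, map_add, map_add]; abel
  | tmul x y => rw [sandL_tmul, sandL_tmul, sandL_tmul, mul_add, add_mul]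

lemma psi (z w : H ⊗[k] H) :
    trimapL B.toBgdCore.Δ A.S
        (TensorProduct.map B.toBgdCore.Δ LinearMap.id w * (z ⊗ₜ[k] (1 : H)))
      - sandL B.toBgdCore.Δ A.S 1 z * ((1 : H) ⊗ₜ[k] Vof A.S w) ∈ B.toBgdCore.iR := by
  induction z using TensorProduct.induction_on with
  | zero => simp only [map_zero, Vof_zero, tmul_zero, zero_tmul, assoc_symm_zero, mul_zero, zero_mul, sub_zero, sandL_C_zero]; exact Submodule.zero_mem _
  | add z₁ z₂ h1 h2 =>
        simp only [map_add, Vof_add, tmul_add, add_tmul, assoc_symm_add, mul_add, add_mul, sandL_C_add]; rw [add_sub_add_comm]; exact add_mem h1 h2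
  | tmul x y =>
    induction w using TensorProduct.induction_on with
    | zero => simp only [map_zero, Vof_zero, tmul_zero, zero_tmul, assoc_symm_zero, mul_zero, zero_mul, sub_zero, sandL_C_zero]; exact Submodule.zero_mem _
    | add w₁ w₂ h1 h2 =>
        simp only [map_add, Vof_add, tmul_add, add_tmul, assoc_symm_add, mul_add, add_mul, sandL_C_add]; rw [add_sub_add_comm]; exact add_mem h1 h2
    | tmul u v =>
      rw [TensorProduct.map_tmul, LinearMap.id_apply, Vof_tmul,
        Algebra.TensorProduct.tmul_mul_tmul, mul_one]
      have step1 : ∀ d : H ⊗[k] H,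
          trimapL B.toBgdCore.Δ A.S ((d * (x ⊗ₜ[k] y)) ⊗ₜ[k] v)
            - B.toBgdCore.Δ (A.S x) * sandL B.toBgdCore.Δ A.S 1 d * (y ⊗ₜ[k] v)
            ∈ B.toBgdCore.iR := by
        intro d
        induction d using TensorProduct.induction_on with
        | zero => simp only [map_zero, Vof_zero, tmul_zero, zero_tmul, assoc_symm_zero, mul_zero, zero_mul, sub_zero, sandL_C_zero]; exact Submodule.zero_mem _
        | add d₁ d₂ h1 h2 =>
          simp only [map_add, tmul_add, add_tmul, add_mul, mul_add]
          rw [add_sub_add_comm]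
          exact add_mem h1 h2
        | tmul a b =>
          rw [Algebra.TensorProduct.tmul_mul_tmul, trimapL_tmul, sandL_tmul, mul_one]
          have e : B.toBgdCore.Δ (A.S x)
                * (B.toBgdCore.Δ (A.S a) * (b ⊗ₜ[k] (1 : H))) * (y ⊗ₜ[k] v)
              = (B.toBgdCore.Δ (A.S x) * B.toBgdCore.Δ (A.S a)) * ((b * y) ⊗ₜ[k] v) := by
            simp [mul_assoc, Algebra.TensorProduct.tmul_mul_tmul]
          rw [e, A.S_antimul]
          exact sub_mul_mem B (B.Δ_mul (A.S x) (A.S a)) _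
      have step2 := sub_mul_mem B
        (Δ_mul_sub_mem B (A.S x) (A.left_axiom u)) (y ⊗ₜ[k] v)
      have e3 : B.toBgdCore.Δ (A.S x) * ((1 : H) ⊗ₜ[k] A.S u) * (y ⊗ₜ[k] v)
          = sandL B.toBgdCore.Δ A.S 1 (x ⊗ₜ[k] y) * ((1 : H) ⊗ₜ[k] (A.S u * v)) := by
        rw [sandL_tmul, mul_one]
        simp [mul_assoc, Algebra.TensorProduct.tmul_mul_tmul]
      rw [← e3]
      exact mem_chain (step1 (B.toBgdCore.Δ u)) step2

lemma phi (z w : H ⊗[k] H) :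
    trimapL B.toBgdCore.Δ A.S
        ((TensorProduct.assoc k H H H).symm (TensorProduct.map LinearMap.id B.toBgdCore.Δ w)
          * (TensorProduct.assoc k H H H).symm ((1 : H) ⊗ₜ[k] z))
      - B.toBgdCore.Δ (Vof A.S w) * z ∈ B.toBgdCore.iR := by
  induction z using TensorProduct.induction_on with
  | zero => simp only [map_zero, Vof_zero, tmul_zero, zero_tmul, assoc_symm_zero, mul_zero, zero_mul, sub_zero, sandL_C_zero]; exact Submodule.zero_mem _
  | add z₁ z₂ h1 h2 =>
        simp only [map_add, Vof_add, tmul_add, add_tmul, assoc_symm_add, mul_add, add_mul, sandL_C_add]; rw [add_sub_add_comm]; exact add_mem h1 h2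
  | tmul x y =>
    induction w using TensorProduct.induction_on with
    | zero => simp only [map_zero, Vof_zero, tmul_zero, zero_tmul, assoc_symm_zero, mul_zero, zero_mul, sub_zero, sandL_C_zero]; exact Submodule.zero_mem _
    | add w₁ w₂ h1 h2 =>
        simp only [map_add, Vof_add, tmul_add, add_tmul, assoc_symm_add, mul_add, add_mul, sandL_C_add]; rw [add_sub_add_comm]; exact add_mem h1 h2
    | tmul u v =>
      rw [TensorProduct.map_tmul, LinearMap.id_apply, Vof_tmul, TensorProduct.assoc_symm_tmul]
      have step : ∀ d : H ⊗[k] H,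
          trimapL B.toBgdCore.Δ A.S
              ((TensorProduct.assoc k H H H).symm (u ⊗ₜ[k] d) * ((1 ⊗ₜ[k] x) ⊗ₜ[k] y))
            = B.toBgdCore.Δ (A.S u) * d * (x ⊗ₜ[k] y) := by
        intro d
        induction d using TensorProduct.induction_on with
        | zero => simp
        | add d₁ d₂ h1 h2 =>
          simp only [map_add, tmul_add, assoc_symm_add, add_mul, mul_add]
          rw [h1, h2]
        | tmul a b =>
          simp only [TensorProduct.assoc_symm_tmul, Algebra.TensorProduct.tmul_mul_tmul,
            mul_one, trimapL_tmul]
          simp [mul_assoc, Algebra.TensorProduct.tmul_mul_tmul]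
      rw [step (B.toBgdCore.Δ v)]
      exact mem_rev (sub_mul_mem B (B.Δ_mul (A.S u) v) (x ⊗ₜ[k] y))

lemma comp_sandL (z w : H ⊗[k] H) :
    sandL B.toBgdCore.Δ A.S (sandL B.toBgdCore.Δ A.S 1 w) z
      - sandL B.toBgdCore.Δ A.S 1 (w * z) ∈ B.toBgdCore.iR := by
  induction z using TensorProduct.induction_on with
  | zero => simp only [map_zero, Vof_zero, tmul_zero, zero_tmul, assoc_symm_zero, mul_zero, zero_mul, sub_zero, sandL_C_zero]; exact Submodule.zero_mem _
  | add z₁ z₂ h1 h2 =>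
        simp only [map_add, Vof_add, tmul_add, add_tmul, assoc_symm_add, mul_add, add_mul, sandL_C_add]; rw [add_sub_add_comm]; exact add_mem h1 h2
  | tmul x y =>
    induction w using TensorProduct.induction_on with
    | zero =>
      rw [map_zero, sandL_C_zero, zero_mul, map_zero, sub_zero]
      exact Submodule.zero_mem _
    | add w₁ w₂ h1 h2 =>
        simp only [map_add, Vof_add, tmul_add, add_tmul, assoc_symm_add, mul_add, add_mul, sandL_C_add]; rw [add_sub_add_comm]; exact add_mem h1 h2
    | tmul u v =>
      rw [sandL_tmul, sandL_tmul, mul_one, Algebra.TensorProduct.tmul_mul_tmul,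
        sandL_tmul, mul_one]
      have e : B.toBgdCore.Δ (A.S x)
            * (B.toBgdCore.Δ (A.S u) * (v ⊗ₜ[k] (1 : H))) * (y ⊗ₜ[k] (1 : H))
          = (B.toBgdCore.Δ (A.S x) * B.toBgdCore.Δ (A.S u)) * ((v * y) ⊗ₜ[k] (1 : H)) := by
        simp [mul_assoc, Algebra.TensorProduct.tmul_mul_tmul]
      rw [e, A.S_antimul]
      exact mem_rev (sub_mul_mem B (B.Δ_mul (A.S x) (A.S u)) _)

variable (C : DXCocycle B)

lemma key9 :
    B.toBgdCore.Δ (Vof A.S C.F) * C.F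
      - sandL B.toBgdCore.Δ A.S 1 C.F * ((1 : H) ⊗ₜ[k] Vof A.S C.F) ∈ B.toBgdCore.iR := by
  have h1 := trimapL_iR3 B A C.cocycle
  rw [map_sub] at h1
  have h2 := psi B A C.F C.F
  have h3 := phi B A C.F C.F
  exact mem_chain (mem_chain (mem_rev h3) (mem_rev h1)) h2

lemma sandLQ_one :
    sandL B.toBgdCore.Δ A.S (sandL B.toBgdCore.Δ A.S 1 C.F) C.Fbar - 1 ∈ B.toBgdCore.iR := by
  have h1 := comp_sandL B A C.Fbar C.F
  have h2 : sandL B.toBgdCore.Δ A.S 1 (C.F * C.Fbar)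
      - sandL B.toBgdCore.Δ A.S 1 1 ∈ B.toBgdCore.iR := by
    have := sandL_one_iR B A C.inv_right
    rwa [map_sub] at this
  exact mem_chain h1 (mem_chain h2 (sandL_one_one B A))

lemma lemma11a (z : H ⊗[k] H) :
    sandL B.toBgdCore.Δ A.S (B.toBgdCore.Δ (Vof A.S C.F) * C.F) z
      - sandL B.toBgdCore.Δ A.S (sandL B.toBgdCore.Δ A.S 1 C.F) z
          * ((1 : H) ⊗ₜ[k] Vof A.S C.F) ∈ B.toBgdCore.iR := by
  induction z using TensorProduct.induction_on with
  | zero => simp only [map_zero, Vof_zero, tmul_zero, zero_tmul, assoc_symm_zero, mul_zero, zero_mul, sub_zero, sandL_C_zero]; exact Submodule.zero_mem _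
  | add z₁ z₂ h1 h2 =>
        simp only [map_add, Vof_add, tmul_add, add_tmul, assoc_symm_add, mul_add, add_mul, sandL_C_add]; rw [add_sub_add_comm]; exact add_mem h1 h2
  | tmul x y =>
    rw [sandL_tmul, sandL_tmul]
    have e : B.toBgdCore.Δ (A.S x) * sandL B.toBgdCore.Δ A.S 1 C.F * (y ⊗ₜ[k] (1 : H))
          * ((1 : H) ⊗ₜ[k] Vof A.S C.F)
        = (B.toBgdCore.Δ (A.S x)
            * (sandL B.toBgdCore.Δ A.S 1 C.F * ((1 : H) ⊗ₜ[k] Vof A.S C.F)))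
          * (y ⊗ₜ[k] (1 : H)) := by
      simp [mul_assoc, Algebra.TensorProduct.tmul_mul_tmul]
    rw [e]
    exact sub_mul_mem B (Δ_mul_sub_mem B (A.S x) (key9 B A C)) _

end TwistAux

/-- `(SF̄¹)₍₁₎(V_F)₍₁₎F'¹F̄² ⊗_R (SF̄¹)₍₂₎(V_F)₍₂₎F'² = 1 ⊗_R V_F`, and the
left-hand side is independent of the representative of `F⁻¹`. -/
theorem lemma_twoid_left (B : LeftBialgebroid k R H) (A : BSAntipode B) (C : DXCocycle B)
    (Vinv : H) (hV1 : Vof A.S C.F * Vinv = 1) (hV2 : Vinv * Vof A.S C.F = 1) :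
    (sandL B.toBgdCore.Δ A.S (B.toBgdCore.Δ (Vof A.S C.F) * C.F) C.Fbar
        - (1 : H) ⊗ₜ[k] Vof A.S C.F ∈ B.toBgdCore.iR) ∧
    (∀ G : H ⊗[k] H, G - C.Fbar ∈ C.iRF →
      sandL B.toBgdCore.Δ A.S (B.toBgdCore.Δ (Vof A.S C.F) * C.F) G
        - sandL B.toBgdCore.Δ A.S (B.toBgdCore.Δ (Vof A.S C.F) * C.F) C.Fbar
        ∈ B.toBgdCore.iR) := by
  refine ⟨?_, ?_⟩
  · have h1 := TwistAux.lemma11a B A C C.Fbar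
    have h2 := TwistAux.sub_mul_mem B (TwistAux.sandLQ_one B A C)
      ((1 : H) ⊗ₜ[k] Vof A.S C.F)
    rw [one_mul] at h2
    exact TwistAux.mem_chain h1 h2
  · intro G hG
    obtain ⟨w, hw, hFw⟩ := hG
    rw [← map_sub, ← hFw, LinearMap.mulLeft_apply]
    have h1 := TwistAux.lemma11a B A C (C.Fbar * w)
    have h2 := TwistAux.comp_sandL B A (C.Fbar * w) C.F
    have h3 : sandL B.toBgdCore.Δ A.S 1 (C.F * (C.Fbar * w)) ∈ B.toBgdCore.iR := by
      have hm : C.F * (C.Fbar * w) ∈ B.toBgdCore.iR := by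
        rw [← mul_assoc]
        have := add_mem (TwistAux.iR_mul_right B C.inv_right w) hw
        rwa [sub_mul, one_mul, sub_add_cancel] at this
      exact TwistAux.sandL_one_iR B A hm
    have h4 : sandL B.toBgdCore.Δ A.S (sandL B.toBgdCore.Δ A.S 1 C.F) (C.Fbar * w)
        ∈ B.toBgdCore.iR := by
      have := add_mem h2 h3
      rwa [sub_add_cancel] at this
    have h5 := TwistAux.iR_mul_right B h4 ((1 : H) ⊗ₜ[k] Vof A.S C.F)
    have := add_mem h1 h5
    rwa [sub_add_cancel] at this
end
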